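/- If F ∈ L²(0, π) and u = Q_μ^{-1} F (i.e., −u'' = F, u(π) = 0, u'(0) = κu(0) with κ ≥ 0), then |u(0)| ≤ 5 ‖F‖_{L²(0,π)}. -/

import Mathlib

open Real MeasureTheory

/-- Cauchy–Schwarz bound for the primitive of `F`. -/
lemma cs_primitive_bound (F : ℝ → ℝ) (hF : ContinuousOn F (Set.Icc 0 Real.pi))
    (t : ℝ) (ht : t ∈ Set.Icc 0 Real.pi) :
    |∫ s in (0:ℝ)..t, F s| ≤ Real.sqrt t *
      Real.sqrt (∫ s in Set.Ioo (0 : ℝ) Real.pi, F s ^ 2) := by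
  obtain ⟨ht0, htπ⟩ := ht
  have hFi : IntegrableOn F (Set.Icc 0 Real.pi) := hF.integrableOn_Icc
  have hsubset : Set.Ioc (0:ℝ) t ⊆ Set.Icc 0 Real.pi :=
    Set.Ioc_subset_Icc_self.trans (Set.Icc_subset_Icc le_rfl htπ)
  have hmeas : AEStronglyMeasurable F (volume.restrict (Set.Ioc 0 t)) :=
    hFi.aestronglyMeasurable.mono_measure (Measure.restrict_mono hsubset le_rfl)
  have hmeasabs : AEStronglyMeasurable (fun s => |F s|) (volume.restrict (Set.Ioc 0 t)) := by
    simpa [Real.norm_eq_abs] using hmeas.norm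
  obtain ⟨C, hC⟩ := IsCompact.exists_bound_of_continuousOn isCompact_Icc hF
  have hmem : MemLp (fun s => |F s|) (ENNReal.ofReal 2)
      (volume.restrict (Set.Ioc 0 t)) := by
    refine MemLp.of_bound hmeasabs C ?_
    filter_upwards [ae_restrict_mem measurableSet_Ioc] with s hs
    simpa [Real.norm_eq_abs] using hC s (hsubset hs)
  have hmem1 : MemLp (fun _ : ℝ => (1:ℝ)) (ENNReal.ofReal 2)
      (volume.restrict (Set.Ioc 0 t)) := memLp_const 1
  have hpq : Real.HolderConjugate 2 2 := by constructor <;> norm_num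
  have hH := integral_mul_le_Lp_mul_Lq_of_nonneg hpq
    (f := fun s => |F s|) (g := fun _ => 1)
    (Filter.Eventually.of_forall fun s => abs_nonneg _)
    (Filter.Eventually.of_forall fun s => zero_le_one) hmem hmem1
  simp only [mul_one, Real.one_rpow] at hH
  have h1 : (∫ s in Set.Ioc (0:ℝ) t, |F s| ^ (2:ℝ)) = ∫ s in Set.Ioc (0:ℝ) t, F s ^ 2 := by
    refine integral_congr_ae (Filter.Eventually.of_forall fun s => ?_)
    have : |F s| ^ (2:ℝ) = |F s| ^ (2:ℕ) := by
      rw [← Real.rpow_natCast]; norm_num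
    simp [this, sq_abs]
  have h2 : (∫ _ in Set.Ioc (0:ℝ) t, (1:ℝ)) = t := by
    simp [Real.volume_Ioc, ENNReal.toReal_ofReal ht0, ht0]
  rw [h1, h2] at hH
  have hF2i : IntegrableOn (fun s => F s ^ 2) (Set.Icc 0 Real.pi) :=
    (hF.pow 2).integrableOn_Icc
  have hπae : ∀ᵐ x : ℝ ∂volume, x ≠ Real.pi := by
    rw [ae_iff]
    simp only [not_not, Set.setOf_eq_eq_singleton]
    exact Real.volume_singleton
  have hst : Set.Ioc (0:ℝ) t ≤ᵐ[volume] Set.Ioo (0:ℝ) Real.pi := by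
    filter_upwards [hπae] with x hx hmem
    exact ⟨hmem.1, lt_of_le_of_ne (hmem.2.trans htπ) hx⟩
  have hsub : ∫ s in Set.Ioc (0:ℝ) t, F s ^ 2 ≤ ∫ s in Set.Ioo (0:ℝ) Real.pi, F s ^ 2 := by
    refine setIntegral_mono_set (hF2i.mono_set Set.Ioo_subset_Icc_self) ?_ hst
    exact Filter.Eventually.of_forall fun s => sq_nonneg _
  have habsint : |∫ s in (0:ℝ)..t, F s| ≤ ∫ s in Set.Ioc (0:ℝ) t, |F s| := by
    rw [intervalIntegral.integral_of_le ht0]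
    simpa [Real.norm_eq_abs] using
      norm_integral_le_integral_norm (μ := volume.restrict (Set.Ioc 0 t)) F
  calc |∫ s in (0:ℝ)..t, F s| ≤ ∫ s in Set.Ioc (0:ℝ) t, |F s| := habsint
    _ ≤ (∫ s in Set.Ioc (0:ℝ) t, F s ^ 2) ^ ((1:ℝ)/2) * t ^ ((1:ℝ)/2) := hH
    _ = Real.sqrt t * Real.sqrt (∫ s in Set.Ioc (0:ℝ) t, F s ^ 2) := by
        rw [← Real.sqrt_eq_rpow, ← Real.sqrt_eq_rpow, mul_comm]
    _ ≤ Real.sqrt t * Real.sqrt (∫ s in Set.Ioo (0:ℝ) Real.pi, F s ^ 2) := by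
        exact mul_le_mul_of_nonneg_left (Real.sqrt_le_sqrt hsub) (Real.sqrt_nonneg _)

/-- If `−u'' = F` on `(0, π)` with `u(π) = 0` and `u'(0) = κ u(0)`, `κ ≥ 0`,
then `|u(0)| ≤ 5 ‖F‖_{L²(0,π)}`. -/
theorem solution_pointwise_bound (κ : ℝ) (hκ : 0 ≤ κ) (u F : ℝ → ℝ)
    (hu : ContDiff ℝ 2 u) (hF : ContinuousOn F (Set.Icc 0 Real.pi))
    (hode : ∀ x ∈ Set.Ioo (0 : ℝ) Real.pi, -deriv (deriv u) x = F x)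
    (hbc1 : u Real.pi = 0) (hbc2 : deriv u 0 = κ * u 0) :
    |u 0| ≤ 5 * Real.sqrt (∫ t in Set.Ioo (0 : ℝ) Real.pi, F t ^ 2) := by
  set N := Real.sqrt (∫ t in Set.Ioo (0 : ℝ) Real.pi, F t ^ 2) with hN
  have hN0 : 0 ≤ N := Real.sqrt_nonneg _
  -- regularity
  have hu2 : ContDiff ℝ ((1:WithTop ℕ∞)+1) u := by
    have : ((1:WithTop ℕ∞)+1) = 2 := by norm_num
    rw [this]; exact hu
  have hud := contDiff_succ_iff_deriv.mp hu2
  have hdu_diff : Differentiable ℝ (deriv u) := hud.2.2.differentiable one_ne_zero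
  have hud2 := contDiff_one_iff_deriv.mp hud.2.2
  have hddu_cont : Continuous (deriv (deriv u)) := hud2.2
  -- FTC for deriv u
  have hFTC2 : ∀ t : ℝ, ∫ s in (0:ℝ)..t, deriv (deriv u) s = deriv u t - deriv u 0 := fun t =>
    intervalIntegral.integral_deriv_eq_sub (fun x _ => hdu_diff x)
      (hddu_cont.intervalIntegrable _ _)
  -- identity for primitive of F on [0, π]
  have hkey : ∀ t ∈ Set.Icc (0:ℝ) Real.pi, ∫ s in (0:ℝ)..t, F s = κ * u 0 - deriv u t := by
    intro t ht
    have hcongr : ∫ s in (0:ℝ)..t, F s = ∫ s in (0:ℝ)..t, -deriv (deriv u) s := by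
      refine intervalIntegral.integral_congr_ae ?_
      have htae : ∀ᵐ x : ℝ ∂volume, x ≠ t := by
        rw [ae_iff]
        simp only [not_not, Set.setOf_eq_eq_singleton]
        exact Real.volume_singleton
      filter_upwards [htae] with x hx hmem
      rw [Set.uIoc_of_le ht.1] at hmem
      have hxIoo : x ∈ Set.Ioo (0:ℝ) Real.pi :=
        ⟨hmem.1, lt_of_le_of_ne (hmem.2.trans ht.2) fun h =>
          hx (le_antisymm hmem.2 (h ▸ ht.2))⟩
      exact (hode x hxIoo).symm
    rw [hcongr, intervalIntegral.integral_neg, hFTC2 t, hbc2]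
    ring
  -- FTC for u on [0, π]
  have hFTC1 : ∫ t in (0:ℝ)..Real.pi, deriv u t = u Real.pi - u 0 :=
    intervalIntegral.integral_deriv_eq_sub (fun x _ => hud.1 x)
      ((contDiff_one_iff_deriv.mp (hu2.of_le (by norm_num))).2.intervalIntegrable _ _)
  -- main identity: ∫₀^π (κ u0 - deriv u t) dt = (1 + π κ) * u 0
  have hmain : ∫ t in (0:ℝ)..Real.pi, (κ * u 0 - deriv u t) = (1 + Real.pi * κ) * u 0 := by
    rw [intervalIntegral.integral_sub (intervalIntegrable_const)
      (hud.2.2.continuous.intervalIntegrable _ _), hFTC1,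
      intervalIntegral.integral_const, hbc1]
    simp [smul_eq_mul]
    ring
  -- bound the integral
  have hbound : |∫ t in (0:ℝ)..Real.pi, (κ * u 0 - deriv u t)| ≤ (2/3) * Real.pi ^ ((3:ℝ)/2) * N := by
    have hptwise : ∀ᵐ t ∂(volume.restrict (Set.uIoc (0:ℝ) Real.pi)),
        ‖κ * u 0 - deriv u t‖ ≤ Real.sqrt t * N := by
      refine (ae_restrict_iff' measurableSet_uIoc).2 (Filter.Eventually.of_forall fun t htm => ?_)
      rw [Set.uIoc_of_le Real.pi_pos.le] at htm
      have htIcc : t ∈ Set.Icc (0:ℝ) Real.pi := ⟨htm.1.le, htm.2⟩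
      have := cs_primitive_bound F hF t htIcc
      rw [hkey t htIcc] at this
      simpa [Real.norm_eq_abs] using this
    have hInt : IntervalIntegrable (fun t => Real.sqrt t * N) volume 0 Real.pi :=
      ((Real.continuous_sqrt.mul continuous_const).intervalIntegrable _ _)
    have h1 := (intervalIntegral.norm_integral_le_of_norm_le Real.pi_pos.le
      ((ae_restrict_iff' measurableSet_Ioc).1 (by rw [← Set.uIoc_of_le Real.pi_pos.le]; exact hptwise))
      hInt).trans (le_abs_self _)
    have h2 : ∫ t in (0:ℝ)..Real.pi, Real.sqrt t * N = ((2/3) * Real.pi ^ ((3:ℝ)/2)) * N := by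
      rw [intervalIntegral.integral_mul_const]
      have hs : ∀ t ∈ Set.uIcc (0:ℝ) Real.pi, Real.sqrt t = t ^ ((1:ℝ)/2) := fun t _ =>
        Real.sqrt_eq_rpow t
      rw [intervalIntegral.integral_congr hs, integral_rpow (Or.inl (by norm_num))]
      rw [show (1:ℝ)/2 + 1 = 3/2 by norm_num, Real.zero_rpow (by norm_num : (3:ℝ)/2 ≠ 0)]
      ring
    have hnn : (0:ℝ) ≤ (2/3) * Real.pi ^ ((3:ℝ)/2) * N :=
      mul_nonneg (mul_nonneg (by norm_num) (Real.rpow_nonneg Real.pi_pos.le _)) hN0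
    calc |∫ t in (0:ℝ)..Real.pi, (κ * u 0 - deriv u t)|
        ≤ |∫ t in (0:ℝ)..Real.pi, Real.sqrt t * N| := by
          simpa [Real.norm_eq_abs] using h1
      _ = (2/3) * Real.pi ^ ((3:ℝ)/2) * N := by rw [h2, abs_of_nonneg hnn]
  -- conclude
  have h3 : |(1 + Real.pi * κ) * u 0| ≤ (2/3) * Real.pi ^ ((3:ℝ)/2) * N := hmain ▸ hbound
  have h4 : |u 0| ≤ |(1 + Real.pi * κ) * u 0| := by
    rw [abs_mul]
    have : (1:ℝ) ≤ |1 + Real.pi * κ| := by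
      rw [abs_of_pos (by positivity)]
      nlinarith [Real.pi_pos]
    nlinarith [abs_nonneg (u 0)]
  have hπ32 : Real.pi ^ ((3:ℝ)/2) ≤ 7.5 := by
    have h1 : Real.pi ^ ((3:ℝ)/2) = Real.pi * Real.sqrt Real.pi := by
      rw [show ((3:ℝ)/2) = 1 + 1/2 by norm_num, Real.rpow_add Real.pi_pos,
        Real.rpow_one, Real.sqrt_eq_rpow]
    have h2 : Real.sqrt Real.pi ≤ 2 := by
      rw [show (2:ℝ) = Real.sqrt 4 by rw [show (4:ℝ) = 2^2 by norm_num, Real.sqrt_sq]; norm_num]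
      exact Real.sqrt_le_sqrt (by nlinarith [Real.pi_le_four])
    have h3' : Real.pi * Real.sqrt Real.pi ≤ 3.15 * 2 :=
      mul_le_mul Real.pi_lt_d2.le h2 (Real.sqrt_nonneg _) (by norm_num)
    rw [h1]; linarith
  calc |u 0| ≤ (2/3) * Real.pi ^ ((3:ℝ)/2) * N := h4.trans h3
    _ ≤ 5 * N := by
        have := mul_le_mul_of_nonneg_right hπ32 hN0
        linarith
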